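/- For each product-basis ground state b ∈ ker H̃_{C_m} of the reference box-on-a-stick Hamiltonian, there exists a unique vector (ν_1,…,ν_n) ∈ {0,1}^n such that b ∈ P(ν_1,…,ν_n), where P(ν_1,…,ν_n) is the joint eigenspace of the particle number operators N_1,…,N_n with eigenvalues ν_1,…,ν_n. In particular, each species occurs at most once in any ground state, and the ground states are labeled by the subsets M ⊆ {1,…,n} of species present. -/

import Mathlib

open scoped BigOperators ComplexOrder Matrix

namespace PVBS

/-- The standard basis vector `|a ⊗ b⟩` of `ℂ^{n+1} ⊗ ℂ^{n+1}`
(realized as functions on `Fin (n+1) × Fin (n+1)`). -/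
def ketPair {n : ℕ} (a b : Fin (n + 1)) : Fin (n + 1) × Fin (n + 1) → ℂ :=
  fun p => if p = (a, b) then 1 else 0

/-- The orthogonal projection onto the span of the vector `v` (interpreted as `0` if `v = 0`). -/
noncomputable def projOnto {P : Type*} [Fintype P] (v : P → ℂ) : Matrix P P ℂ :=
  ((∑ p, Complex.normSq (v p) : ℝ) : ℂ)⁻¹ • Matrix.of fun a b => v a * (starRingEnd ℂ) (v b)

/-- The vector `φ_i = |0 ⊗ i⟩ − λ_i |i ⊗ 0⟩` (the species `1 ≤ i ≤ n` is encoded as `i : Fin n`,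
with corresponding basis element `i.succ : Fin (n+1)`). -/
def phiA {n : ℕ} (lam : ℝ) (i : Fin n) : Fin (n + 1) × Fin (n + 1) → ℂ :=
  fun p => ketPair 0 i.succ p - (lam : ℂ) * ketPair i.succ 0 p

/-- The vector `φ_{ij} = λ_i |i ⊗ j⟩ − λ_j |j ⊗ i⟩` for `i < j`. -/
def phiB {n : ℕ} (lami lamj : ℝ) (i j : Fin n) : Fin (n + 1) × Fin (n + 1) → ℂ :=
  fun p => (lami : ℂ) * ketPair i.succ j.succ p - (lamj : ℂ) * ketPair j.succ i.succ p

/-- The vector `φ_{ii} = |i ⊗ i⟩`. -/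
def phiC {n : ℕ} (i : Fin n) : Fin (n + 1) × Fin (n + 1) → ℂ := ketPair i.succ i.succ

/-- The local PVBS interaction `h^{(k)}` in a fixed direction `k`, built from the anisotropy
parameters `lam i = λ_{i+1}^{(k)}`: the sum of the orthogonal projections onto the normalized
versions of the vectors `φ_i` (for `1 ≤ i ≤ n`) and `φ_{ij}` (for `1 ≤ i ≤ j ≤ n`). -/
noncomputable def hloc {n : ℕ} (lam : Fin n → ℝ) :
    Matrix (Fin (n + 1) × Fin (n + 1)) (Fin (n + 1) × Fin (n + 1)) ℂ :=
  (∑ i, projOnto (phiA (lam i) i)) +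
    ∑ i, ∑ j,
      if i < j then projOnto (phiB (lam i) (lam j) i j)
      else if i = j then projOnto (phiC i) else 0

/-- The reference interaction `h̃ = Σ_{i=1}^n |0⊗i⟩⟨0⊗i| + Σ_{1≤i≤j≤n} |i⊗j⟩⟨i⊗j|`
(the `δ = 0` model). -/
noncomputable def htilde (n : ℕ) :
    Matrix (Fin (n + 1) × Fin (n + 1)) (Fin (n + 1) × Fin (n + 1)) ℂ :=
  (∑ i : Fin n, projOnto (ketPair 0 i.succ)) +
    ∑ i : Fin n, ∑ j : Fin n, if i ≤ j then projOnto (ketPair i.succ j.succ) else 0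

/-- The embedding of a two-site operator `h2` at the ordered pair of sites `(x, y)` of `V`,
acting as the identity on all other sites. -/
def embed {n : ℕ} {V : Type*} [Fintype V] [DecidableEq V] (x y : V)
    (h2 : Matrix (Fin (n + 1) × Fin (n + 1)) (Fin (n + 1) × Fin (n + 1)) ℂ) :
    Matrix (V → Fin (n + 1)) (V → Fin (n + 1)) ℂ :=
  Matrix.of fun σ τ =>
    if ∀ z, z ≠ x → z ≠ y → σ z = τ z then h2 (σ x, σ y) (τ x, τ y) else 0

/-- The spectral gap of a matrix: the smallest positive (real) element of its spectrum
(by convention `sInf ∅ = 0` if there is none). -/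
noncomputable def gap {I : Type*} [Fintype I] [DecidableEq I] (M : Matrix I I ℂ) : ℝ :=
  sInf {γ : ℝ | 0 < γ ∧ (γ : ℂ) ∈ spectrum ℂ M}

/-! ### The periodic box `Λ_L = (ZMod N)^d`, `N = 2L`. -/

/-- The neighbor `x + e_k` of the site `x` on the torus `(ZMod N)^d`. -/
def nbrT {d N : ℕ} (x : Fin d → ZMod N) (k : Fin d) : Fin d → ZMod N :=
  fun j => if j = k then x j + 1 else x j

/-- The interaction term `h_e = h^{(k)}_{x, x+e_k}` attached to the oriented edge
`e = (x, k)` of the torus. -/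
noncomputable def hedge {n d N : ℕ} [NeZero N] (lam : Fin n → Fin d → ℝ)
    (e : (Fin d → ZMod N) × Fin d) :
    Matrix ((Fin d → ZMod N) → Fin (n + 1)) ((Fin d → ZMod N) → Fin (n + 1)) ℂ :=
  embed e.1 (nbrT e.1 e.2) (hloc fun i => lam i e.2)

/-- The PVBS Hamiltonian `H_L = Σ_{x ∈ Λ_L} Σ_{k=1}^d h^{(k)}_{x,x+e_k}` on the periodic
box `Λ_L = (ZMod N)^d` with `N = 2L`. -/
noncomputable def HL (n d N : ℕ) [NeZero N] (lam : Fin n → Fin d → ℝ) :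
    Matrix ((Fin d → ZMod N) → Fin (n + 1)) ((Fin d → ZMod N) → Fin (n + 1)) ℂ :=
  ∑ e : (Fin d → ZMod N) × Fin d, hedge lam e

/-- The (unordered) endpoints of the oriented torus edge `e = (x, k)`. -/
def epT {d N : ℕ} (e : (Fin d → ZMod N) × Fin d) : Finset (Fin d → ZMod N) :=
  {e.1, nbrT e.1 e.2}

/-- `Q = Σ_{e ∼ e'} {h_e, h_{e'}}`: the sum over (unordered) pairs of torus edges sharing
exactly one vertex of the anticommutator `{h_e, h_{e'}}`, written as a sum of the products
`h_e * h_{e'}` over ordered pairs. -/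
noncomputable def QL (n d N : ℕ) [NeZero N] (lam : Fin n → Fin d → ℝ) :
    Matrix ((Fin d → ZMod N) → Fin (n + 1)) ((Fin d → ZMod N) → Fin (n + 1)) ℂ :=
  ∑ e : (Fin d → ZMod N) × Fin d, ∑ e' : (Fin d → ZMod N) × Fin d,
    if (epT e ∩ epT e').card = 1 then hedge lam e * hedge lam e' else 0

/-- `R = Σ_{e ≁ e'} {h_e, h_{e'}}`: the sum over (unordered) pairs of torus edges sharing
no vertex of the anticommutator `{h_e, h_{e'}}`, written as a sum of the products
`h_e * h_{e'}` over ordered pairs. -/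
noncomputable def RL (n d N : ℕ) [NeZero N] (lam : Fin n → Fin d → ℝ) :
    Matrix ((Fin d → ZMod N) → Fin (n + 1)) ((Fin d → ZMod N) → Fin (n + 1)) ℂ :=
  ∑ e : (Fin d → ZMod N) × Fin d, ∑ e' : (Fin d → ZMod N) × Fin d,
    if (epT e ∩ epT e').card = 0 then hedge lam e * hedge lam e' else 0

/-! ### Subgraphs of `ℤ^d` and the box on a stick `C_m`. -/

/-- The neighbor `x + e_k` of the site `x ∈ ℤ^d`. -/
def nbrZ {d : ℕ} (x : Fin d → ℤ) (k : Fin d) : Fin d → ℤ :=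
  fun j => if j = k then x j + 1 else x j

/-- The point `l·e_1 ∈ ℤ^d`. -/
def stickPt (d : ℕ) (l : ℕ) : Fin d → ℤ := fun k => if (k : ℕ) = 0 then (l : ℤ) else 0

/-- The stick `S = {0, e_1, …, (n−1)e_1} ⊂ ℤ^d`. -/
def stickF (d n : ℕ) : Finset (Fin d → ℤ) := (Finset.range n).image (stickPt d)

/-- The box `B_m = {Σ a_k e_k : n ≤ a_1 ≤ m+n, 0 ≤ a_k ≤ m for k ≥ 2} ⊂ ℤ^d`. -/
def boxF (d n m : ℕ) : Finset (Fin d → ℤ) :=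
  Finset.image
    (fun a : Fin d → Fin (m + 1) => fun k : Fin d =>
      if (k : ℕ) = 0 then (n : ℤ) + (a k : ℤ) else (a k : ℤ))
    Finset.univ

/-- The box on a stick `C_m = S ∪ B_m ⊂ ℤ^d`. -/
def CmF (d n m : ℕ) : Finset (Fin d → ℤ) := stickF d n ∪ boxF d n m

/-- The PVBS subsystem Hamiltonian `H_G = Σ_{e ∈ E_G} h_e` of a finite subgraph
`G ⊂ ℤ^d` (with one interaction term for every oriented lattice edge with both endpoints
in `G`), acting on `⊗_{x ∈ G} ℂ^{n+1}`. -/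
noncomputable def HG {d : ℕ} (n : ℕ) (lam : Fin n → Fin d → ℝ) (G : Finset (Fin d → ℤ)) :
    Matrix ({x // x ∈ G} → Fin (n + 1)) ({x // x ∈ G} → Fin (n + 1)) ℂ :=
  ∑ x : {x // x ∈ G}, ∑ k : Fin d,
    if h : nbrZ (x : Fin d → ℤ) k ∈ G then
      embed x ⟨nbrZ (x : Fin d → ℤ) k, h⟩ (hloc fun i => lam i k)
    else 0

/-- The PVBS Hamiltonian `H_{C_m}` of the box on a stick. -/
noncomputable def HCm (d n m : ℕ) (lam : Fin n → Fin d → ℝ) :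
    Matrix ({x // x ∈ CmF d n m} → Fin (n + 1)) ({x // x ∈ CmF d n m} → Fin (n + 1)) ℂ :=
  HG n lam (CmF d n m)

/-- The reference (`δ = 0`) Hamiltonian `H̃_G = Σ_{e ∈ E_G} h̃_e` of a finite subgraph
`G ⊂ ℤ^d`. -/
noncomputable def HtildeG {d : ℕ} (n : ℕ) (G : Finset (Fin d → ℤ)) :
    Matrix ({x // x ∈ G} → Fin (n + 1)) ({x // x ∈ G} → Fin (n + 1)) ℂ :=
  ∑ x : {x // x ∈ G}, ∑ k : Fin d,
    if h : nbrZ (x : Fin d → ℤ) k ∈ G then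
      embed x ⟨nbrZ (x : Fin d → ℤ) k, h⟩ (htilde n)
    else 0

/-! ### Translates `x + C_m` inside the torus. -/

/-- The interaction term of the lattice edge `(c, c + e_k)` of `ℤ^d`, translated by
`x` into the torus `(ZMod N)^d` (reducing coordinates mod `N`). -/
noncomputable def hedgeTrans {n d N : ℕ} [NeZero N] (lam : Fin n → Fin d → ℝ)
    (x : Fin d → ZMod N) (c : Fin d → ℤ) (k : Fin d) :
    Matrix ((Fin d → ZMod N) → Fin (n + 1)) ((Fin d → ZMod N) → Fin (n + 1)) ℂ :=
  embed (fun j => x j + (c j : ZMod N)) (fun j => x j + ((nbrZ c k) j : ZMod N))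
    (hloc fun i => lam i k)

/-- The subsystem Hamiltonian `H_{x+C_m}` of the translate `x + C_m ⊂ Λ_L`, acting on the
full torus Hilbert space. -/
noncomputable def HtransCm (n d N m : ℕ) [NeZero N] (lam : Fin n → Fin d → ℝ)
    (x : Fin d → ZMod N) :
    Matrix ((Fin d → ZMod N) → Fin (n + 1)) ((Fin d → ZMod N) → Fin (n + 1)) ℂ :=
  ∑ c : {y // y ∈ CmF d n m}, ∑ k : Fin d,
    if nbrZ (c : Fin d → ℤ) k ∈ CmF d n m then hedgeTrans lam x (c : Fin d → ℤ) k else 0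

/-- The (unordered) endpoints of the oriented lattice edge `(c, c + e_k)` of `ℤ^d`. -/
def epZ {d : ℕ} (c : Fin d → ℤ) (k : Fin d) : Finset (Fin d → ℤ) := {c, nbrZ c k}

/-- `Q_{x+C_m}`: the sum of the anticommutators `{h_e, h_{e'}}` over (unordered) pairs of
edges of `x + C_m` sharing exactly one vertex, written as a sum of products over ordered
pairs. -/
noncomputable def QtransCm (n d N m : ℕ) [NeZero N] (lam : Fin n → Fin d → ℝ)
    (x : Fin d → ZMod N) :
    Matrix ((Fin d → ZMod N) → Fin (n + 1)) ((Fin d → ZMod N) → Fin (n + 1)) ℂ :=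
  ∑ c : {y // y ∈ CmF d n m}, ∑ k : Fin d,
    ∑ c' : {y // y ∈ CmF d n m}, ∑ k' : Fin d,
      if nbrZ (c : Fin d → ℤ) k ∈ CmF d n m ∧ nbrZ (c' : Fin d → ℤ) k' ∈ CmF d n m ∧
          (epZ (c : Fin d → ℤ) k ∩ epZ (c' : Fin d → ℤ) k').card = 1 then
        hedgeTrans lam x (c : Fin d → ℤ) k * hedgeTrans lam x (c' : Fin d → ℤ) k'
      else 0

/-- `R_{x+C_m}`: the sum of the anticommutators `{h_e, h_{e'}}` over (unordered) pairs of
vertex-disjoint edges of `x + C_m`, written as a sum of products over ordered pairs. -/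
noncomputable def RtransCm (n d N m : ℕ) [NeZero N] (lam : Fin n → Fin d → ℝ)
    (x : Fin d → ZMod N) :
    Matrix ((Fin d → ZMod N) → Fin (n + 1)) ((Fin d → ZMod N) → Fin (n + 1)) ℂ :=
  ∑ c : {y // y ∈ CmF d n m}, ∑ k : Fin d,
    ∑ c' : {y // y ∈ CmF d n m}, ∑ k' : Fin d,
      if nbrZ (c : Fin d → ℤ) k ∈ CmF d n m ∧ nbrZ (c' : Fin d → ℤ) k' ∈ CmF d n m ∧
          (epZ (c : Fin d → ℤ) k ∩ epZ (c' : Fin d → ℤ) k').card = 0 then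
        hedgeTrans lam x (c : Fin d → ℤ) k * hedgeTrans lam x (c' : Fin d → ℤ) k'
      else 0

/-- The particle number operator `N_i` of species `1 ≤ i ≤ n` on `⊗_{x ∈ G} ℂ^{n+1}`:
diagonal in the product basis, counting the sites carrying the label `i`. -/
noncomputable def Nop {d : ℕ} {n : ℕ} (G : Finset (Fin d → ℤ)) (i : Fin n) :
    Matrix ({x // x ∈ G} → Fin (n + 1)) ({x // x ∈ G} → Fin (n + 1)) ℂ :=
  Matrix.diagonal fun σ => ((Finset.univ.filter fun x => σ x = i.succ).card : ℂ)

/-- The product basis vector of `⊗_{x} ℂ^{n+1}` labelled by the configuration `σ`. -/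
def bvec {I : Type*} [DecidableEq I] (σ : I) : I → ℂ := fun τ => if τ = σ then 1 else 0

/-! A product state `σ` lies in `ker H̃_G` iff no edge `(x, x + e_k)` of `G` carries a pair
penalised by `h̃`, i.e. iff along every edge a nonzero label at the head forces a strictly larger
label at the tail. Every site `z` of `C_m` is reached from the origin by a monotone lattice path
inside `C_m` of length `|z|₁`, so a nonzero label at `z` satisfies `σ z + |z|₁ ≤ n`. Hence all
particles sit on the stick, where the nonzero labels strictly decrease along `e_1` and are
therefore pairwise distinct. -/

theorem add_le_of_exists_lt_pred {α : Type*} {f h : α → ℕ} {B : ℕ} (hB : ∀ z, f z ≤ B)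
    (hpred : ∀ z, f z ≠ 0 → 0 < h z → ∃ w, h w + 1 = h z ∧ f z < f w) {z : α} (hz : f z ≠ 0) :
    f z + h z ≤ B := by
  induction hk : h z generalizing z with
  | zero => simpa using hB z
  | succ k ih =>
    obtain ⟨w, hw, hlt⟩ := hpred z hz (by omega)
    have := ih (z := w) (by omega) (by omega)
    omega

theorem apply_lt_of_lt_of_succ_lt {g : ℕ → ℕ} {N : ℕ}
    (hg : ∀ l, l + 1 < N → g (l + 1) ≠ 0 → g (l + 1) < g l) {a b : ℕ} (hab : a < b) (hbN : b < N)
    (hb : g b ≠ 0) : g b < g a := by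
  induction b, hab using Nat.le_induction with
  | base => exact hg a hbN hb
  | succ b hab ih => exact (hg b hbN hb).trans (ih (by omega) (by have := hg b hbN hb; omega))

theorem projOnto_ketPair_apply_self {n : ℕ} (a b : Fin (n + 1)) (p : Fin (n + 1) × Fin (n + 1)) :
    projOnto (ketPair a b) p p = if p = (a, b) then 1 else 0 := by
  have hnorm : (∑ q, Complex.normSq (ketPair a b q) : ℝ) = 1 := by
    simp [ketPair, apply_ite Complex.normSq]
  rw [projOnto, hnorm]
  by_cases h : p = (a, b) <;> simp [ketPair, h]

theorem htilde_apply_self {n : ℕ} (a b : Fin (n + 1)) :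
    htilde n (a, b) (a, b) = if b ≠ 0 ∧ a ≤ b then 1 else 0 := by
  simp only [htilde, Matrix.add_apply, Matrix.sum_apply, projOnto_ketPair_apply_self,
    apply_ite (fun M : Matrix _ _ ℂ => M (a, b) (a, b)), Matrix.zero_apply, Prod.mk.injEq]
  cases b using Fin.cases with
  | zero => simp [(Fin.succ_ne_zero _).symm]
  | succ j =>
    cases a using Fin.cases with
    | zero => simp [(Fin.succ_ne_zero _).symm]
    | succ i =>
      simp only [Fin.succ_ne_zero, Fin.succ_le_succ_iff, Fin.succ_inj, false_and, if_false,
        Finset.sum_const_zero, zero_add, ne_eq, not_false_eq_true, true_and, ite_and]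
      rw [Finset.sum_eq_single i (fun x _ hx => by simp [Ne.symm hx]) (by simp),
        Finset.sum_eq_single j (fun x _ hx => by simp [Ne.symm hx]) (by simp)]
      simp

theorem embed_apply_self {n : ℕ} {V : Type*} [Fintype V] [DecidableEq V] (x y : V)
    (h2 : Matrix (Fin (n + 1) × Fin (n + 1)) (Fin (n + 1) × Fin (n + 1)) ℂ) (σ : V → Fin (n + 1)) :
    embed x y h2 σ σ = h2 (σ x, σ y) (σ x, σ y) := by
  simp [embed]

theorem mulVec_bvec {I : Type*} [Fintype I] [DecidableEq I] (M : Matrix I I ℂ) (σ : I) :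
    M.mulVec (bvec σ) = M.col σ := by
  have hsingle : bvec σ = Pi.single σ 1 := funext fun τ => by simp [bvec, Pi.single_apply]
  rw [hsingle, Matrix.mulVec_single_one]

theorem HtildeG_apply_self {d n : ℕ} (G : Finset (Fin d → ℤ)) (σ : {x // x ∈ G} → Fin (n + 1)) :
    HtildeG n G σ σ = ((∑ x : {x // x ∈ G}, ∑ k : Fin d,
      if h : nbrZ (x : Fin d → ℤ) k ∈ G then
        if σ ⟨_, h⟩ ≠ 0 ∧ σ x ≤ σ ⟨_, h⟩ then 1 else 0
      else 0 : ℕ) : ℂ) := by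
  simp only [HtildeG, Matrix.sum_apply, Nat.cast_sum]
  refine Finset.sum_congr rfl fun x _ => Finset.sum_congr rfl fun k _ => ?_
  split_ifs <;> simp_all [embed_apply_self, htilde_apply_self]

theorem lt_of_mulVec_bvec_eq_zero {d n : ℕ} {G : Finset (Fin d → ℤ)}
    {σ : {x // x ∈ G} → Fin (n + 1)} (hker : (HtildeG n G).mulVec (bvec σ) = 0)
    (x : {x // x ∈ G}) (k : Fin d) (h : nbrZ (x : Fin d → ℤ) k ∈ G) (hne : σ ⟨_, h⟩ ≠ 0) :
    σ ⟨_, h⟩ < σ x := by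
  have hzero := congrFun hker σ
  rw [mulVec_bvec, Matrix.col_apply, HtildeG_apply_self, Pi.zero_apply, Nat.cast_eq_zero,
    Finset.sum_eq_zero_iff] at hzero
  have hedge := Finset.sum_eq_zero_iff.mp (hzero x (Finset.mem_univ x)) k (Finset.mem_univ k)
  rw [dif_pos h, ite_eq_right_iff] at hedge
  exact not_le.mp fun hle => one_ne_zero (hedge ⟨hne, hle⟩)

def coordSum {d : ℕ} (z : Fin d → ℤ) : ℕ := ∑ k, (z k).toNat

theorem coordSum_nbrZ {d : ℕ} {w : Fin d → ℤ} (hw : ∀ j, 0 ≤ w j) (k : Fin d) :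
    coordSum (nbrZ w k) = coordSum w + 1 := by
  have hcoord : ∀ j, (nbrZ w k j).toNat = (w j).toNat + if j = k then 1 else 0 := fun j => by
    have := hw j
    rcases eq_or_ne j k with rfl | hj
    · simp [nbrZ]; omega
    · simp [nbrZ, hj]
  simp [coordSum, hcoord, Finset.sum_add_distrib]

theorem stickPt_apply_zero {d : ℕ} (hd : 0 < d) (l : ℕ) : stickPt d l ⟨0, hd⟩ = l := if_pos rfl

theorem coordSum_stickPt {d : ℕ} (hd : 0 < d) (l : ℕ) : coordSum (stickPt d l) = l := by
  rw [coordSum, Finset.sum_eq_single ⟨0, hd⟩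
    (fun k _ hk => by simp [stickPt, Fin.ext_iff.not.mp hk]) (by simp), stickPt_apply_zero,
    Int.toNat_natCast]

theorem nbrZ_stickPt {d : ℕ} (hd : 0 < d) (l : ℕ) :
    nbrZ (stickPt d l) ⟨0, hd⟩ = stickPt d (l + 1) := by
  funext j
  by_cases hj : (j : ℕ) = 0 <;> simp [nbrZ, stickPt, hj, Fin.ext_iff]

theorem mem_boxF_iff {d n m : ℕ} {z : Fin d → ℤ} :
    z ∈ boxF d n m ↔ ∀ k : Fin d,
      ((k : ℕ) = 0 → (n : ℤ) ≤ z k ∧ z k ≤ n + m) ∧ ((k : ℕ) ≠ 0 → 0 ≤ z k ∧ z k ≤ m) := by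
  constructor
  · rintro hz k
    obtain ⟨a, -, rfl⟩ := Finset.mem_image.mp hz
    have := (a k).is_le
    by_cases hk : (k : ℕ) = 0 <;> simp [hk] <;> omega
  · intro h
    have hshift : ∀ k : Fin d, 0 ≤ (if (k : ℕ) = 0 then z k - n else z k) ∧
        (if (k : ℕ) = 0 then z k - n else z k) ≤ m := fun k => by
      obtain ⟨h0, h1⟩ := h k
      split_ifs with hk
      · have := h0 hk; omega
      · exact h1 hk
    refine Finset.mem_image.mpr ⟨fun k => ⟨(if (k : ℕ) = 0 then z k - n else z k).toNat,
      by have := hshift k; omega⟩, Finset.mem_univ _, funext fun k => ?_⟩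
    simp only [Int.toNat_of_nonneg (hshift k).1]
    split_ifs <;> ring

theorem nonneg_of_mem_CmF {d n m : ℕ} {z : Fin d → ℤ} (hz : z ∈ CmF d n m) (k : Fin d) :
    0 ≤ z k := by
  rcases Finset.mem_union.mp hz with hs | hb
  · obtain ⟨l, -, rfl⟩ := Finset.mem_image.mp hs
    unfold stickPt
    split_ifs <;> omega
  · have := mem_boxF_iff.mp hb k
    by_cases hk : (k : ℕ) = 0
    · have := (this.1 hk).1; omega
    · exact (this.2 hk).1

theorem le_coordSum_of_mem_boxF {d n m : ℕ} (hd : 0 < d) {z : Fin d → ℤ} (hz : z ∈ boxF d n m) :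
    n ≤ coordSum z := by
  have h0 := ((mem_boxF_iff.mp hz ⟨0, hd⟩).1 rfl).1
  calc n ≤ (z ⟨0, hd⟩).toNat := by omega
    _ ≤ coordSum z := Finset.single_le_sum (f := fun k => (z k).toNat)
        (fun _ _ => Nat.zero_le _) (Finset.mem_univ _)

theorem stickPt_mem_CmF {d n m l : ℕ} (hl : l < n) : stickPt d l ∈ CmF d n m :=
  Finset.mem_union_left _ (Finset.mem_image_of_mem _ (Finset.mem_range.mpr hl))

theorem stickPt_mem_CmF_iff {d n m : ℕ} (hd : 0 < d) {l : ℕ} :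
    stickPt d l ∈ CmF d n m ↔ l ≤ n + m := by
  constructor
  · intro h
    rcases Finset.mem_union.mp h with hs | hb
    · obtain ⟨l', hl', he⟩ := Finset.mem_image.mp hs
      have := congrFun he ⟨0, hd⟩
      simp only [stickPt_apply_zero, Nat.cast_inj] at this
      simp at hl'
      omega
    · have := ((mem_boxF_iff.mp hb ⟨0, hd⟩).1 rfl).2
      rw [stickPt_apply_zero] at this
      omega
  · intro h
    rcases Nat.lt_or_ge l n with hl | hl
    · exact stickPt_mem_CmF hl
    · refine Finset.mem_union_right _ (mem_boxF_iff.mpr fun k => ?_)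
      by_cases hk : (k : ℕ) = 0 <;> simp [stickPt, hk]
      omega

theorem exists_nbrZ_eq_of_mem_CmF {d n m : ℕ} (hd : 0 < d) {z : Fin d → ℤ} (hz : z ∈ CmF d n m)
    (hpos : 0 < coordSum z) : ∃ w ∈ CmF d n m, ∃ k, nbrZ w k = z := by
  by_cases hoff : ∃ k : Fin d, (k : ℕ) ≠ 0 ∧ 0 < z k
  · obtain ⟨k, hk0, hk⟩ := hoff
    have hb : z ∈ boxF d n m := by
      refine (Finset.mem_union.mp hz).resolve_left fun hs => ?_
      obtain ⟨l, -, rfl⟩ := Finset.mem_image.mp hs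
      simp [stickPt, hk0] at hk
    refine ⟨Function.update z k (z k - 1), Finset.mem_union_right _ (mem_boxF_iff.mpr fun j => ?_),
      k, funext fun j => ?_⟩
    · have := mem_boxF_iff.mp hb j
      by_cases hj : j = k
      · subst hj; simp only [Function.update_self]; omega
      · simpa only [Function.update_of_ne hj] using this
    · by_cases hj : j = k
      · subst hj; simp [nbrZ]
      · simp [nbrZ, hj]
  · push Not at hoff
    have hz_eq : z = stickPt d (z ⟨0, hd⟩).toNat := by
      funext k
      have := nonneg_of_mem_CmF hz k
      by_cases hk : (k : ℕ) = 0
      · obtain rfl : k = ⟨0, hd⟩ := Fin.ext hk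
        simp [stickPt, this]
      · simp only [stickPt, hk, if_false]; have := hoff k hk; omega
    set l := (z ⟨0, hd⟩).toNat
    rw [hz_eq, coordSum_stickPt hd] at hpos
    rw [hz_eq, stickPt_mem_CmF_iff hd] at hz
    refine ⟨stickPt d (l - 1), (stickPt_mem_CmF_iff hd).mpr (by omega), ⟨0, hd⟩, ?_⟩
    rw [nbrZ_stickPt hd, Nat.sub_add_cancel hpos, ← hz_eq]

/-- The configuration extended by the vacuum label `0` off `G`, so that lattice paths can be
followed without carrying membership proofs. -/
def label {d n : ℕ} {G : Finset (Fin d → ℤ)} (σ : {x // x ∈ G} → Fin (n + 1))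
    (z : Fin d → ℤ) : ℕ :=
  if h : z ∈ G then σ ⟨z, h⟩ else 0

section Label

variable {d n : ℕ} {G : Finset (Fin d → ℤ)} {σ : {x // x ∈ G} → Fin (n + 1)}

theorem label_val (x : {x // x ∈ G}) : label σ x = σ x := by
  simp [label]

theorem label_le (z : Fin d → ℤ) : label σ z ≤ n := by
  unfold label
  split_ifs
  exacts [Fin.is_le _, Nat.zero_le _]

theorem mem_of_label_ne_zero {z : Fin d → ℤ} (hz : label σ z ≠ 0) : z ∈ G := by
  by_contra h
  simp [label, h] at hz

theorem label_nbrZ_lt (hker : (HtildeG n G).mulVec (bvec σ) = 0) {z : Fin d → ℤ} (hz : z ∈ G)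
    (k : Fin d) (hne : label σ (nbrZ z k) ≠ 0) : label σ (nbrZ z k) < label σ z := by
  have h := mem_of_label_ne_zero hne
  simp only [label, dif_pos h, dif_pos hz] at hne ⊢
  exact lt_of_mulVec_bvec_eq_zero hker ⟨z, hz⟩ k h (by exact_mod_cast hne)

end Label

section BoxOnAStick

variable {d n m : ℕ} {σ : {x // x ∈ CmF d n m} → Fin (n + 1)}

theorem label_add_coordSum_le (hd : 0 < d) (hker : (HtildeG n (CmF d n m)).mulVec (bvec σ) = 0)
    {z : Fin d → ℤ} (hz : label σ z ≠ 0) : label σ z + coordSum z ≤ n := by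
  refine add_le_of_exists_lt_pred label_le (fun z hz hpos => ?_) hz
  obtain ⟨w, hw, k, rfl⟩ := exists_nbrZ_eq_of_mem_CmF hd (mem_of_label_ne_zero hz) hpos
  exact ⟨w, (coordSum_nbrZ (nonneg_of_mem_CmF hw) k).symm, label_nbrZ_lt hker hw k hz⟩

theorem exists_eq_stickPt_of_label_ne_zero (hd : 0 < d)
    (hker : (HtildeG n (CmF d n m)).mulVec (bvec σ) = 0) {z : Fin d → ℤ} (hz : label σ z ≠ 0) :
    ∃ l < n, z = stickPt d l := by
  rcases Finset.mem_union.mp (mem_of_label_ne_zero hz) with hs | hb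
  · obtain ⟨l, hl, rfl⟩ := Finset.mem_image.mp hs
    exact ⟨l, Finset.mem_range.mp hl, rfl⟩
  · have := label_add_coordSum_le hd hker hz
    have := le_coordSum_of_mem_boxF hd hb
    omega

theorem label_stickPt_lt (hd : 0 < d) (hker : (HtildeG n (CmF d n m)).mulVec (bvec σ) = 0)
    {a b : ℕ} (hab : a < b) (hbn : b < n) (hb : label σ (stickPt d b) ≠ 0) :
    label σ (stickPt d b) < label σ (stickPt d a) := by
  refine apply_lt_of_lt_of_succ_lt (g := fun l => label σ (stickPt d l)) (fun l hl hne => ?_)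
    hab hbn hb
  simp only [← nbrZ_stickPt hd] at hne ⊢
  exact label_nbrZ_lt hker (stickPt_mem_CmF (by omega)) _ hne

theorem label_injOn (hd : 0 < d) (hker : (HtildeG n (CmF d n m)).mulVec (bvec σ) = 0) :
    Set.InjOn (label σ) {z | label σ z ≠ 0} := by
  intro z hz z' hz' heq
  obtain ⟨a, ha, rfl⟩ := exists_eq_stickPt_of_label_ne_zero hd hker hz
  obtain ⟨b, hb, rfl⟩ := exists_eq_stickPt_of_label_ne_zero hd hker hz'
  rcases lt_trichotomy a b with hab | rfl | hab
  · exact absurd heq (label_stickPt_lt hd hker hab hb hz').ne'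
  · rfl
  · exact absurd heq (label_stickPt_lt hd hker hab ha hz).ne

theorem card_filter_eq_succ_le_one (hd : 0 < d)
    (hker : (HtildeG n (CmF d n m)).mulVec (bvec σ) = 0) (i : Fin n) :
    (Finset.univ.filter fun x => σ x = i.succ).card ≤ 1 := by
  have hlabel : ∀ x ∈ Finset.univ.filter fun x => σ x = i.succ, label σ x = (i.succ : ℕ) :=
    fun x hx => by rw [label_val, (Finset.mem_filter.mp hx).2]
  have hne : ((i.succ : Fin (n + 1)) : ℕ) ≠ 0 := Nat.succ_ne_zero i
  refine Finset.card_le_one.mpr fun x hx y hy => Subtype.ext ?_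
  exact label_injOn hd hker (by rwa [Set.mem_ofPred_eq, hlabel x hx])
    (by rwa [Set.mem_ofPred_eq, hlabel y hy]) ((hlabel x hx).trans (hlabel y hy).symm)

end BoxOnAStick

theorem Nop_mulVec_bvec {d n : ℕ} (G : Finset (Fin d → ℤ)) (σ : {x // x ∈ G} → Fin (n + 1))
    (i : Fin n) : (Nop G i).mulVec (bvec σ) =
      ((Finset.univ.filter fun x => σ x = i.succ).card : ℂ) • bvec σ := by
  rw [mulVec_bvec]
  funext τ
  by_cases hτ : τ = σ <;> simp [Nop, bvec, hτ]

theorem natCast_smul_bvec_injective {I : Type*} [DecidableEq I] (σ : I) :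
    Function.Injective fun a : ℕ => (a : ℂ) • bvec σ := fun a b hab => by
  simpa [bvec] using congrFun hab σ

theorem ground_state_particle_sectors_general (d n m : ℕ) (hd : 2 ≤ d)
    (σ : {x // x ∈ CmF d n m} → Fin (n + 1))
    (hker : (HtildeG n (CmF d n m)).mulVec (bvec σ) = 0) :
    ∃! ν : Fin n → ℕ, (∀ i, ν i ≤ 1) ∧
      ∀ i : Fin n, (Nop (CmF d n m) i).mulVec (bvec σ) = (ν i : ℂ) • bvec σ := by
  have hd0 : 0 < d := by omega
  refine ⟨fun i => (Finset.univ.filter fun x => σ x = i.succ).card,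
    ⟨card_filter_eq_succ_le_one hd0 hker, Nop_mulVec_bvec _ σ⟩, ?_⟩
  rintro ν ⟨-, hν⟩
  funext i
  exact natCast_smul_bvec_injective σ ((hν i).symm.trans (Nop_mulVec_bvec _ σ i))

/-- For each product-basis ground state `b ∈ ker H̃_{C_m}` there is a unique vector
`(ν_1, …, ν_n) ∈ {0,1}^n` with `b ∈ P(ν_1, …, ν_n)`: each species occurs at most once. -/
theorem ground_state_particle_sectors (d n m : ℕ) (hd : 2 ≤ d) (hn : 1 ≤ n) (hm : 4 ≤ m)
    (σ : {x // x ∈ CmF d n m} → Fin (n + 1))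
    (hker : (HtildeG n (CmF d n m)).mulVec (bvec σ) = 0) :
    ∃! ν : Fin n → ℕ, (∀ i, ν i ≤ 1) ∧
      ∀ i : Fin n, (Nop (CmF d n m) i).mulVec (bvec σ) = (ν i : ℂ) • bvec σ :=
  ground_state_particle_sectors_general d n m hd σ hker

end PVBS
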